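/- The automorphism δt_{β,β} of K₁₀ acts on the eight homogeneous components J^{(0,0)}, J^{(2,1)}, J^{(-2,1)}, J^{(1,0)}, J^{(-1,0)}, J^{(0,1)}, J^{(1,1)}, J^{(-1,1)} of the fine ℤ×ℤ₂-grading with respective eigenvalues 1, -β², -β⁻², β, β⁻¹, -1, -β, -β⁻¹; hence these eigenvalues are pairwise distinct if and only if β⁴ ≠ 1 and β⁶ ≠ 1. -/
import Mathlib


open Matrix BigOperators

variable {F : Type*} [Field F]

/-- The Kaplansky superalgebra K, with basis e = (1,0,0) (even), x = (0,1,0), y = (0,0,1)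
(odd), and multiplication e² = e, ex = xe = x/2, ey = ye = y/2, xy = e = -yx, x² = y² = 0. -/
def kMul (a b : Fin 3 → F) : Fin 3 → F :=
  ![a 0 * b 0 + a 1 * b 2 - a 2 * b 1,
    (a 0 * b 1 + a 1 * b 0) / 2,
    (a 0 * b 2 + a 2 * b 0) / 2]

/-- The basis element e of K. -/
def eK : Fin 3 → F := ![1, 0, 0]

/-- The basis element x of K. -/
def xK : Fin 3 → F := ![0, 1, 0]

/-- The basis element y of K. -/
def yK : Fin 3 → F := ![0, 0, 1]

/-- The even part K₀ = Fe of the Kaplansky superalgebra. -/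
def kEven : Set (Fin 3 → F) := {a | a 1 = 0 ∧ a 2 = 0}

/-- The odd part K₁ = Fx ⊕ Fy of the Kaplansky superalgebra. -/
def kOdd : Set (Fin 3 → F) := {a | a 0 = 0}

/-- The Kac superalgebra K₁₀ = F·1 ⊕ (K ⊗ K), in the basis
(1, e⊗e, x⊗x, x⊗y, y⊗x, y⊗y, e⊗x, x⊗e, e⊗y, y⊗e) (indices 0,…,9), with product
determined by (a⊗b)(c⊗d) = (-1)^{|b||c|}(ac ⊗ bd - (3/4)(a|c)(b|d)·1), where
(e|e) = 1/2, (x|y) = 1 = -(y|x). -/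
def k10Mul (a b : Fin 10 → F) : Fin 10 → F :=
  ![(1 : F) * a 0 * b 0 + ((-3 : F)/16) * a 1 * b 1 + ((3 : F)/4) * a 2 * b 5 + ((-3 : F)/4) * a 3 * b 4 + ((-3 : F)/4) * a 4 * b 3 + ((3 : F)/4) * a 5 * b 2 + ((-3 : F)/8) * a 6 * b 8 + ((-3 : F)/8) * a 7 * b 9 + ((3 : F)/8) * a 8 * b 6 + ((3 : F)/8) * a 9 * b 7,
    (1 : F) * a 0 * b 1 + (1 : F) * a 1 * b 0 + (1 : F) * a 1 * b 1 + (-1 : F) * a 2 * b 5 + (1 : F) * a 3 * b 4 + (1 : F) * a 4 * b 3 + (-1 : F) * a 5 * b 2 + (1 : F) * a 6 * b 8 + (1 : F) * a 7 * b 9 + (-1 : F) * a 8 * b 6 + (-1 : F) * a 9 * b 7,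
    (1 : F) * a 0 * b 2 + ((1 : F)/4) * a 1 * b 2 + (1 : F) * a 2 * b 0 + ((1 : F)/4) * a 2 * b 1 + ((-1 : F)/4) * a 6 * b 7 + ((1 : F)/4) * a 7 * b 6,
    (1 : F) * a 0 * b 3 + ((1 : F)/4) * a 1 * b 3 + (1 : F) * a 3 * b 0 + ((1 : F)/4) * a 3 * b 1 + ((1 : F)/4) * a 7 * b 8 + ((-1 : F)/4) * a 8 * b 7,
    (1 : F) * a 0 * b 4 + ((1 : F)/4) * a 1 * b 4 + (1 : F) * a 4 * b 0 + ((1 : F)/4) * a 4 * b 1 + ((-1 : F)/4) * a 6 * b 9 + ((1 : F)/4) * a 9 * b 6,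
    (1 : F) * a 0 * b 5 + ((1 : F)/4) * a 1 * b 5 + (1 : F) * a 5 * b 0 + ((1 : F)/4) * a 5 * b 1 + ((-1 : F)/4) * a 8 * b 9 + ((1 : F)/4) * a 9 * b 8,
    (1 : F) * a 0 * b 6 + ((1 : F)/2) * a 1 * b 6 + ((-1 : F)/2) * a 2 * b 9 + ((1 : F)/2) * a 4 * b 7 + (1 : F) * a 6 * b 0 + ((1 : F)/2) * a 6 * b 1 + ((1 : F)/2) * a 7 * b 4 + ((-1 : F)/2) * a 9 * b 2,
    (1 : F) * a 0 * b 7 + ((1 : F)/2) * a 1 * b 7 + ((1 : F)/2) * a 2 * b 8 + ((-1 : F)/2) * a 3 * b 6 + ((-1 : F)/2) * a 6 * b 3 + (1 : F) * a 7 * b 0 + ((1 : F)/2) * a 7 * b 1 + ((1 : F)/2) * a 8 * b 2,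
    (1 : F) * a 0 * b 8 + ((1 : F)/2) * a 1 * b 8 + ((-1 : F)/2) * a 3 * b 9 + ((1 : F)/2) * a 5 * b 7 + ((1 : F)/2) * a 7 * b 5 + (1 : F) * a 8 * b 0 + ((1 : F)/2) * a 8 * b 1 + ((-1 : F)/2) * a 9 * b 3,
    (1 : F) * a 0 * b 9 + ((1 : F)/2) * a 1 * b 9 + ((1 : F)/2) * a 4 * b 8 + ((-1 : F)/2) * a 5 * b 6 + ((-1 : F)/2) * a 6 * b 5 + ((1 : F)/2) * a 8 * b 4 + (1 : F) * a 9 * b 0 + ((1 : F)/2) * a 9 * b 1]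

/-- The even part of K₁₀: span of 1, e⊗e, x⊗x, x⊗y, y⊗x, y⊗y. -/
def k10Even : Set (Fin 10 → F) := {u | u 6 = 0 ∧ u 7 = 0 ∧ u 8 = 0 ∧ u 9 = 0}

/-- The odd part of K₁₀: span of e⊗x, x⊗e, e⊗y, y⊗e. -/
def k10Odd : Set (Fin 10 → F) :=
  {u | u 0 = 0 ∧ u 1 = 0 ∧ u 2 = 0 ∧ u 3 = 0 ∧ u 4 = 0 ∧ u 5 = 0}

/-- The index of the basis tensor (basis i) ⊗ (basis j) of K ⊗ K inside the basis of K₁₀. -/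
def pairIdx : Fin 3 → Fin 3 → Fin 10 := fun i j => ![![1, 6, 8], ![7, 2, 3], ![9, 4, 5]] i j

/-- First tensor factor of the m-th basis element of K₁₀ (m ≠ 0). -/
def fstIdx : Fin 10 → Fin 3 := ![0, 0, 1, 1, 2, 2, 0, 1, 0, 2]

/-- Second tensor factor of the m-th basis element of K₁₀ (m ≠ 0). -/
def sndIdx : Fin 10 → Fin 3 := ![0, 0, 1, 2, 1, 2, 1, 0, 2, 0]

/-- The coordinates in K₁₀ of the tensor v ⊗ w of two elements of K. -/
def tensorVec (v w : Fin 3 → F) : Fin 10 → F :=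
  fun m => if m = 0 then 0 else v (fstIdx m) * w (sndIdx m)

/-- The endomorphism of K₁₀ fixing 1 and acting as f ⊗ g on K ⊗ K. -/
def Phi (f g : (Fin 3 → F) → (Fin 3 → F)) (u : Fin 10 → F) : Fin 10 → F :=
  fun m => (if m = 0 then u 0 else 0) +
    ∑ i : Fin 3, ∑ j : Fin 3,
      u (pairIdx i j) * tensorVec (f (Pi.single i 1)) (g (Pi.single j 1)) m

/-- A superalgebra automorphism of the Kaplansky superalgebra K. -/
def IsKAut (φ : (Fin 3 → F) ≃ₗ[F] (Fin 3 → F)) : Prop :=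
  (∀ a b, φ (kMul a b) = kMul (φ a) (φ b)) ∧
  (∀ a ∈ kEven, φ a ∈ kEven) ∧ (∀ a ∈ kOdd, φ a ∈ kOdd)

/-- The exchange automorphism δ of K₁₀: it fixes 1 and sends a⊗b to (-1)^{|a||b|} b⊗a. -/
def deltaMap (u : Fin 10 → F) : Fin 10 → F :=
  ![u 0, u 1, -u 2, -u 4, -u 3, -u 5, u 7, u 6, u 9, u 8]

/-- The torus automorphism t_λ of K: e ↦ e, x ↦ λx, y ↦ λ⁻¹y. -/
def tK (l : Fˣ) (a : Fin 3 → F) : Fin 3 → F :=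
  ![a 0, (l : F) * a 1, ((l⁻¹ : Fˣ) : F) * a 2]

/-- The eight homogeneous components J^{(0,0)}, J^{(2,1)}, J^{(-2,1)}, J^{(1,0)},
J^{(-1,0)}, J^{(0,1)}, J^{(1,1)}, J^{(-1,1)} of the fine ℤ×ℤ₂-grading of K₁₀. -/
def fineComp (F : Type*) [Field F] : Fin 8 → Submodule F (Fin 10 → F) :=
  ![Submodule.span F {Pi.single 0 1, Pi.single 1 1, Pi.single 3 1 - Pi.single 4 1},
    Submodule.span F {Pi.single 2 1},
    Submodule.span F {Pi.single 5 1},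
    Submodule.span F {Pi.single 6 1 + Pi.single 7 1},
    Submodule.span F {Pi.single 8 1 + Pi.single 9 1},
    Submodule.span F {Pi.single 3 1 + Pi.single 4 1},
    Submodule.span F {Pi.single 6 1 - Pi.single 7 1},
    Submodule.span F {Pi.single 8 1 - Pi.single 9 1}]


lemma fstIdx_0 : fstIdx 0 = 0 := rfl
lemma sndIdx_0 : sndIdx 0 = 0 := rfl
lemma fstIdx_1 : fstIdx 1 = 0 := rfl
lemma sndIdx_1 : sndIdx 1 = 0 := rfl
lemma fstIdx_2 : fstIdx 2 = 1 := rfl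
lemma sndIdx_2 : sndIdx 2 = 1 := rfl
lemma fstIdx_3 : fstIdx 3 = 1 := rfl
lemma sndIdx_3 : sndIdx 3 = 2 := rfl
lemma fstIdx_4 : fstIdx 4 = 2 := rfl
lemma sndIdx_4 : sndIdx 4 = 1 := rfl
lemma fstIdx_5 : fstIdx 5 = 2 := rfl
lemma sndIdx_5 : sndIdx 5 = 2 := rfl
lemma fstIdx_6 : fstIdx 6 = 0 := rfl
lemma sndIdx_6 : sndIdx 6 = 1 := rfl
lemma fstIdx_7 : fstIdx 7 = 1 := rfl
lemma sndIdx_7 : sndIdx 7 = 0 := rfl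
lemma fstIdx_8 : fstIdx 8 = 0 := rfl
lemma sndIdx_8 : sndIdx 8 = 2 := rfl
lemma fstIdx_9 : fstIdx 9 = 2 := rfl
lemma sndIdx_9 : sndIdx 9 = 0 := rfl
lemma pairIdx_00 : pairIdx 0 0 = 1 := rfl
lemma pairIdx_01 : pairIdx 0 1 = 6 := rfl
lemma pairIdx_02 : pairIdx 0 2 = 8 := rfl
lemma pairIdx_10 : pairIdx 1 0 = 7 := rfl
lemma pairIdx_11 : pairIdx 1 1 = 2 := rfl
lemma pairIdx_12 : pairIdx 1 2 = 3 := rfl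
lemma pairIdx_20 : pairIdx 2 0 = 9 := rfl
lemma pairIdx_21 : pairIdx 2 1 = 4 := rfl
lemma pairIdx_22 : pairIdx 2 2 = 5 := rfl

lemma v10_0 {α : Type*} (a₀ a₁ a₂ a₃ a₄ a₅ a₆ a₇ a₈ a₉ : α) :
    (![a₀,a₁,a₂,a₃,a₄,a₅,a₆,a₇,a₈,a₉]) (0 : Fin 10) = a₀ := rfl
lemma v10_1 {α : Type*} (a₀ a₁ a₂ a₃ a₄ a₅ a₆ a₇ a₈ a₉ : α) :
    (![a₀,a₁,a₂,a₃,a₄,a₅,a₆,a₇,a₈,a₉]) (1 : Fin 10) = a₁ := rfl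
lemma v10_2 {α : Type*} (a₀ a₁ a₂ a₃ a₄ a₅ a₆ a₇ a₈ a₉ : α) :
    (![a₀,a₁,a₂,a₃,a₄,a₅,a₆,a₇,a₈,a₉]) (2 : Fin 10) = a₂ := rfl
lemma v10_3 {α : Type*} (a₀ a₁ a₂ a₃ a₄ a₅ a₆ a₇ a₈ a₉ : α) :
    (![a₀,a₁,a₂,a₃,a₄,a₅,a₆,a₇,a₈,a₉]) (3 : Fin 10) = a₃ := rfl
lemma v10_4 {α : Type*} (a₀ a₁ a₂ a₃ a₄ a₅ a₆ a₇ a₈ a₉ : α) :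
    (![a₀,a₁,a₂,a₃,a₄,a₅,a₆,a₇,a₈,a₉]) (4 : Fin 10) = a₄ := rfl
lemma v10_5 {α : Type*} (a₀ a₁ a₂ a₃ a₄ a₅ a₆ a₇ a₈ a₉ : α) :
    (![a₀,a₁,a₂,a₃,a₄,a₅,a₆,a₇,a₈,a₉]) (5 : Fin 10) = a₅ := rfl
lemma v10_6 {α : Type*} (a₀ a₁ a₂ a₃ a₄ a₅ a₆ a₇ a₈ a₉ : α) :
    (![a₀,a₁,a₂,a₃,a₄,a₅,a₆,a₇,a₈,a₉]) (6 : Fin 10) = a₆ := rfl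
lemma v10_7 {α : Type*} (a₀ a₁ a₂ a₃ a₄ a₅ a₆ a₇ a₈ a₉ : α) :
    (![a₀,a₁,a₂,a₃,a₄,a₅,a₆,a₇,a₈,a₉]) (7 : Fin 10) = a₇ := rfl
lemma v10_8 {α : Type*} (a₀ a₁ a₂ a₃ a₄ a₅ a₆ a₇ a₈ a₉ : α) :
    (![a₀,a₁,a₂,a₃,a₄,a₅,a₆,a₇,a₈,a₉]) (8 : Fin 10) = a₈ := rfl
lemma v10_9 {α : Type*} (a₀ a₁ a₂ a₃ a₄ a₅ a₆ a₇ a₈ a₉ : α) :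
    (![a₀,a₁,a₂,a₃,a₄,a₅,a₆,a₇,a₈,a₉]) (9 : Fin 10) = a₉ := rfl

/-- Closed form of δ∘(t_β⊗t_β) as a vector transformation. -/
def kv {F : Type*} [Field F] (b : Fˣ) (u : Fin 10 → F) : Fin 10 → F :=
  ![u 0, u 1, -((b:F)^2) * u 2, -u 4, -u 3, -(((b:F))⁻¹^2) * u 5,
    (b:F) * u 7, (b:F) * u 6, ((b:F))⁻¹ * u 9, ((b:F))⁻¹ * u 8]

set_option maxHeartbeats 1000000 in
lemma key {F : Type*} [Field F] (b : Fˣ) (u : Fin 10 → F) :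
    deltaMap (Phi (tK b) (tK b) u) = kv b u := by
  funext m
  fin_cases m <;>
    simp [deltaMap, Phi, tK, tensorVec, kv, Fin.sum_univ_succ, Pi.single_apply,
      pairIdx_00, pairIdx_01, pairIdx_02, pairIdx_10, pairIdx_11, pairIdx_12,
      pairIdx_20, pairIdx_21, pairIdx_22,
      fstIdx_0, fstIdx_1, fstIdx_2, fstIdx_3, fstIdx_4, fstIdx_5, fstIdx_6, fstIdx_7,
      fstIdx_8, fstIdx_9, sndIdx_0, sndIdx_1, sndIdx_2, sndIdx_3, sndIdx_4, sndIdx_5,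
      sndIdx_6, sndIdx_7, sndIdx_8, sndIdx_9] <;>
    ring

lemma kv_add {F : Type*} [Field F] (b : Fˣ) (x y : Fin 10 → F) :
    kv b (x + y) = kv b x + kv b y := by
  funext m; fin_cases m <;> simp [kv, v10_0, v10_1, v10_2, v10_3, v10_4, v10_5, v10_6, v10_7, v10_8, v10_9] <;> ring

lemma kv_smul {F : Type*} [Field F] (b : Fˣ) (a : F) (x : Fin 10 → F) :
    kv b (a • x) = a • kv b x := by
  funext m; fin_cases m <;> simp [kv, v10_0, v10_1, v10_2, v10_3, v10_4, v10_5, v10_6, v10_7, v10_8, v10_9] <;> ring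

lemma kv_zero {F : Type*} [Field F] (b : Fˣ) : kv b (0 : Fin 10 → F) = 0 := by
  funext m; fin_cases m <;> simp [kv, v10_0, v10_1, v10_2, v10_3, v10_4, v10_5, v10_6, v10_7, v10_8, v10_9]

lemma eig_span {F : Type*} [Field F] (b : Fˣ) (cst : F) (s : Set (Fin 10 → F))
    (h : ∀ v ∈ s, kv b v = cst • v) :
    ∀ u ∈ Submodule.span F s, deltaMap (Phi (tK b) (tK b) u) = cst • u := by
  intro u hu
  rw [key]
  induction hu using Submodule.span_induction with
  | mem v hv => exact h v hv
  | zero => simp [kv_zero]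
  | add x y _ _ ihx ihy => rw [kv_add, ihx, ihy, smul_add]
  | smul a x _ ihx => rw [kv_smul, ihx, smul_comm]

lemma inj_aux {F : Type*} [Field F] [CharZero F] (c : F) (hc : c ≠ 0) :
    Function.Injective (![(1:F), -c^2, -(c^2)⁻¹, c, c⁻¹, -1, -c, -c⁻¹] : Fin 8 → F) ↔
      (c^4 ≠ 1 ∧ c^6 ≠ 1) := by
  have hq : c * c⁻¹ = 1 := mul_inv_cancel₀ hc
  have hq3 : (c^2)⁻¹ = c⁻¹ * c⁻¹ := by
    rw [sq, _root_.mul_inv_rev]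
  constructor
  · intro hinj
    constructor
    · intro h4
      have hfac : (c^2 - 1) * (c^2 + 1) = 0 := by linear_combination h4
      rcases mul_eq_zero.mp hfac with hA | hB
      · have := hinj (a₁ := 1) (a₂ := 5) (show (-c^2 : F) = -1 by linear_combination -hA)
        exact absurd this (by decide)
      · have := hinj (a₁ := 0) (a₂ := 1) (show (1 : F) = -c^2 by linear_combination hB)
        exact absurd this (by decide)
    · intro h6
      have hfac : (c^3 - 1) * (c^3 + 1) = 0 := by linear_combination h6
      rcases mul_eq_zero.mp hfac with hA | hB
      · have := hinj (a₁ := 1) (a₂ := 7)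
          (show (-c^2 : F) = -c⁻¹ by linear_combination (-c⁻¹) * hA + c^2 * hq)
        exact absurd this (by decide)
      · have := hinj (a₁ := 1) (a₂ := 4)
          (show (-c^2 : F) = c⁻¹ by linear_combination (-c⁻¹) * hB + c^2 * hq)
        exact absurd this (by decide)
  · rintro ⟨h4, h6⟩ i j h
    fin_cases i <;> fin_cases j
    · rfl
    · exact absurd (show c^4 = 1 by
        have hij : ((1:F)) = (-c^2) := h
        linear_combination ((-1:F) + c^2) * hij + (0) * hq) h4
    · exact absurd (show c^4 = 1 by
        have hij : ((1:F)) = (-(c^2)⁻¹) := h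
        linear_combination ((-1:F) * c^2 + c^4) * hij + ((1:F) + c * c⁻¹ + (-1:F) * c^2 + (-1:F) * c^3 * c⁻¹) * hq + (c^2 + (-1:F) * c^4) * hq3) h4
    · exact absurd (show c^4 = 1 by
        have hij : ((1:F)) = (c) := h
        linear_combination ((-1:F) + (-1:F) * c + (-1:F) * c^2 + (-1:F) * c^3) * hij + (0) * hq) h4
    · exact absurd (show c^4 = 1 by
        have hij : ((1:F)) = (c⁻¹) := h
        linear_combination (c + c^2 + c^3 + c^4) * hij + ((1:F) + c + c^2 + c^3) * hq) h4
    · exact absurd (show c^4 = 1 by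
        have hij : ((1:F)) = (-1) := h
        linear_combination ((-1/2:F) + (1/2:F) * c^4) * hij + (0) * hq) h4
    · exact absurd (show c^4 = 1 by
        have hij : ((1:F)) = (-c) := h
        linear_combination ((-1:F) + c + (-1:F) * c^2 + c^3) * hij + (0) * hq) h4
    · exact absurd (show c^4 = 1 by
        have hij : ((1:F)) = (-c⁻¹) := h
        linear_combination ((-1:F) * c + c^2 + (-1:F) * c^3 + c^4) * hij + ((1:F) + (-1:F) * c + c^2 + (-1:F) * c^3) * hq) h4
    · exact absurd (show c^4 = 1 by
        have hij : (-c^2) = ((1:F)) := h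
        linear_combination ((1:F) + (-1:F) * c^2) * hij + (0) * hq) h4
    · rfl
    · exact absurd (show c^4 = 1 by
        have hij : (-c^2) = (-(c^2)⁻¹) := h
        linear_combination ((-1:F) * c^2) * hij + ((1:F) + c * c⁻¹) * hq + (c^2) * hq3) h4
    · exact absurd (show c^4 = 1 by
        have hij : (-c^2) = (c) := h
        linear_combination ((-1:F) + c⁻¹ + c + (-1:F) * c^2) * hij + ((1:F) + c) * hq) h4
    · exact absurd (show c^6 = 1 by
        have hij : (-c^2) = (c⁻¹) := h
        linear_combination (c + (-1:F) * c^4) * hij + ((1:F) + (-1:F) * c^3) * hq) h6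
    · exact absurd (show c^4 = 1 by
        have hij : (-c^2) = (-1) := h
        linear_combination ((-1:F) + (-1:F) * c^2) * hij + (0) * hq) h4
    · exact absurd (show c^4 = 1 by
        have hij : (-c^2) = (-c) := h
        linear_combination ((-1:F) + (-1:F) * c⁻¹ + (-1:F) * c + (-1:F) * c^2) * hij + ((1:F) + (-1:F) * c) * hq) h4
    · exact absurd (show c^6 = 1 by
        have hij : (-c^2) = (-c⁻¹) := h
        linear_combination ((-1:F) * c + (-1:F) * c^4) * hij + ((1:F) + c^3) * hq) h6
    · exact absurd (show c^4 = 1 by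
        have hij : (-(c^2)⁻¹) = ((1:F)) := h
        linear_combination (c^2 + (-1:F) * c^4) * hij + ((1:F) + c * c⁻¹ + (-1:F) * c^2 + (-1:F) * c^3 * c⁻¹) * hq + (c^2 + (-1:F) * c^4) * hq3) h4
    · exact absurd (show c^4 = 1 by
        have hij : (-(c^2)⁻¹) = (-c^2) := h
        linear_combination (c^2) * hij + ((1:F) + c * c⁻¹) * hq + (c^2) * hq3) h4
    · rfl
    · exact absurd (show c^6 = 1 by
        have hij : (-(c^2)⁻¹) = (c) := h
        linear_combination (c^2 + (-1:F) * c^5) * hij + ((1:F) + c * c⁻¹ + (-1:F) * c^3 + (-1:F) * c^4 * c⁻¹) * hq + (c^2 + (-1:F) * c^5) * hq3) h6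
    · exact absurd (show c^4 = 1 by
        have hij : (-(c^2)⁻¹) = (c⁻¹) := h
        linear_combination (c^2 + (-1:F) * c^3 + c^4 + (-1:F) * c^5) * hij + ((1:F) + c * c⁻¹ + (-1:F) * c^2 * c⁻¹ + c^3 * c⁻¹ + (-1:F) * c^4 + (-1:F) * c^4 * c⁻¹) * hq + (c^2 + (-1:F) * c^3 + c^4 + (-1:F) * c^5) * hq3) h4
    · exact absurd (show c^4 = 1 by
        have hij : (-(c^2)⁻¹) = (-1) := h
        linear_combination (c^2 + c^4) * hij + ((1:F) + c * c⁻¹ + c^2 + c^3 * c⁻¹) * hq + (c^2 + c^4) * hq3) h4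
    · exact absurd (show c^6 = 1 by
        have hij : (-(c^2)⁻¹) = (-c) := h
        linear_combination (c^2 + c^5) * hij + ((1:F) + c * c⁻¹ + c^3 + c^4 * c⁻¹) * hq + (c^2 + c^5) * hq3) h6
    · exact absurd (show c^4 = 1 by
        have hij : (-(c^2)⁻¹) = (-c⁻¹) := h
        linear_combination (c^2 + c^3 + c^4 + c^5) * hij + ((1:F) + c * c⁻¹ + c^2 * c⁻¹ + c^3 * c⁻¹ + (-1:F) * c^4 + c^4 * c⁻¹) * hq + (c^2 + c^3 + c^4 + c^5) * hq3) h4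
    · exact absurd (show c^4 = 1 by
        have hij : (c) = ((1:F)) := h
        linear_combination ((1:F) + c + c^2 + c^3) * hij + (0) * hq) h4
    · exact absurd (show c^4 = 1 by
        have hij : (c) = (-c^2) := h
        linear_combination ((1:F) + (-1:F) * c⁻¹ + (-1:F) * c + c^2) * hij + ((1:F) + c) * hq) h4
    · exact absurd (show c^6 = 1 by
        have hij : (c) = (-(c^2)⁻¹) := h
        linear_combination ((-1:F) * c^2 + c^5) * hij + ((1:F) + c * c⁻¹ + (-1:F) * c^3 + (-1:F) * c^4 * c⁻¹) * hq + (c^2 + (-1:F) * c^5) * hq3) h6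
    · rfl
    · exact absurd (show c^4 = 1 by
        have hij : (c) = (c⁻¹) := h
        linear_combination (c + c^3) * hij + ((1:F) + c^2) * hq) h4
    · exact absurd (show c^4 = 1 by
        have hij : (c) = (-1) := h
        linear_combination ((-1:F) + c + (-1:F) * c^2 + c^3) * hij + (0) * hq) h4
    · exact absurd (show c^4 = 1 by
        have hij : (c) = (-c) := h
        linear_combination ((-1/2:F) * c⁻¹ + (1/2:F) * c^3) * hij + ((1:F)) * hq) h4
    · exact absurd (show c^4 = 1 by
        have hij : (c) = (-c⁻¹) := h
        linear_combination ((-1:F) * c + c^3) * hij + ((1:F) + (-1:F) * c^2) * hq) h4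
    · exact absurd (show c^4 = 1 by
        have hij : (c⁻¹) = ((1:F)) := h
        linear_combination ((-1:F) * c + (-1:F) * c^2 + (-1:F) * c^3 + (-1:F) * c^4) * hij + ((1:F) + c + c^2 + c^3) * hq) h4
    · exact absurd (show c^6 = 1 by
        have hij : (c⁻¹) = (-c^2) := h
        linear_combination ((-1:F) * c + c^4) * hij + ((1:F) + (-1:F) * c^3) * hq) h6
    · exact absurd (show c^4 = 1 by
        have hij : (c⁻¹) = (-(c^2)⁻¹) := h
        linear_combination ((-1:F) * c^2 + c^3 + (-1:F) * c^4 + c^5) * hij + ((1:F) + c * c⁻¹ + (-1:F) * c^2 * c⁻¹ + c^3 * c⁻¹ + (-1:F) * c^4 + (-1:F) * c^4 * c⁻¹) * hq + (c^2 + (-1:F) * c^3 + c^4 + (-1:F) * c^5) * hq3) h4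
    · exact absurd (show c^4 = 1 by
        have hij : (c⁻¹) = (c) := h
        linear_combination ((-1:F) * c + (-1:F) * c^3) * hij + ((1:F) + c^2) * hq) h4
    · rfl
    · exact absurd (show c^4 = 1 by
        have hij : (c⁻¹) = (-1) := h
        linear_combination ((-1:F) * c + c^2 + (-1:F) * c^3 + c^4) * hij + ((1:F) + (-1:F) * c + c^2 + (-1:F) * c^3) * hq) h4
    · exact absurd (show c^4 = 1 by
        have hij : (c⁻¹) = (-c) := h
        linear_combination ((-1:F) * c + c^3) * hij + ((1:F) + (-1:F) * c^2) * hq) h4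
    · exact absurd (show c^4 = 1 by
        have hij : (c⁻¹) = (-c⁻¹) := h
        linear_combination ((-1/2:F) * c + (1/2:F) * c^5) * hij + ((1:F) + (-1:F) * c^4) * hq) h4
    · exact absurd (show c^4 = 1 by
        have hij : (-1) = ((1:F)) := h
        linear_combination ((1/2:F) + (-1/2:F) * c^4) * hij + (0) * hq) h4
    · exact absurd (show c^4 = 1 by
        have hij : (-1) = (-c^2) := h
        linear_combination ((1:F) + c^2) * hij + (0) * hq) h4
    · exact absurd (show c^4 = 1 by
        have hij : (-1) = (-(c^2)⁻¹) := h
        linear_combination ((-1:F) * c^2 + (-1:F) * c^4) * hij + ((1:F) + c * c⁻¹ + c^2 + c^3 * c⁻¹) * hq + (c^2 + c^4) * hq3) h4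
    · exact absurd (show c^4 = 1 by
        have hij : (-1) = (c) := h
        linear_combination ((1:F) + (-1:F) * c + c^2 + (-1:F) * c^3) * hij + (0) * hq) h4
    · exact absurd (show c^4 = 1 by
        have hij : (-1) = (c⁻¹) := h
        linear_combination (c + (-1:F) * c^2 + c^3 + (-1:F) * c^4) * hij + ((1:F) + (-1:F) * c + c^2 + (-1:F) * c^3) * hq) h4
    · rfl
    · exact absurd (show c^4 = 1 by
        have hij : (-1) = (-c) := h
        linear_combination ((1:F) + c + c^2 + c^3) * hij + (0) * hq) h4
    · exact absurd (show c^4 = 1 by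
        have hij : (-1) = (-c⁻¹) := h
        linear_combination ((-1:F) * c + (-1:F) * c^2 + (-1:F) * c^3 + (-1:F) * c^4) * hij + ((1:F) + c + c^2 + c^3) * hq) h4
    · exact absurd (show c^4 = 1 by
        have hij : (-c) = ((1:F)) := h
        linear_combination ((1:F) + (-1:F) * c + c^2 + (-1:F) * c^3) * hij + (0) * hq) h4
    · exact absurd (show c^4 = 1 by
        have hij : (-c) = (-c^2) := h
        linear_combination ((1:F) + c⁻¹ + c + c^2) * hij + ((1:F) + (-1:F) * c) * hq) h4
    · exact absurd (show c^6 = 1 by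
        have hij : (-c) = (-(c^2)⁻¹) := h
        linear_combination ((-1:F) * c^2 + (-1:F) * c^5) * hij + ((1:F) + c * c⁻¹ + c^3 + c^4 * c⁻¹) * hq + (c^2 + c^5) * hq3) h6
    · exact absurd (show c^4 = 1 by
        have hij : (-c) = (c) := h
        linear_combination ((1/2:F) * c⁻¹ + (-1/2:F) * c^3) * hij + ((1:F)) * hq) h4
    · exact absurd (show c^4 = 1 by
        have hij : (-c) = (c⁻¹) := h
        linear_combination (c + (-1:F) * c^3) * hij + ((1:F) + (-1:F) * c^2) * hq) h4
    · exact absurd (show c^4 = 1 by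
        have hij : (-c) = (-1) := h
        linear_combination ((-1:F) + (-1:F) * c + (-1:F) * c^2 + (-1:F) * c^3) * hij + (0) * hq) h4
    · rfl
    · exact absurd (show c^4 = 1 by
        have hij : (-c) = (-c⁻¹) := h
        linear_combination ((-1:F) * c + (-1:F) * c^3) * hij + ((1:F) + c^2) * hq) h4
    · exact absurd (show c^4 = 1 by
        have hij : (-c⁻¹) = ((1:F)) := h
        linear_combination (c + (-1:F) * c^2 + c^3 + (-1:F) * c^4) * hij + ((1:F) + (-1:F) * c + c^2 + (-1:F) * c^3) * hq) h4
    · exact absurd (show c^6 = 1 by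
        have hij : (-c⁻¹) = (-c^2) := h
        linear_combination (c + c^4) * hij + ((1:F) + c^3) * hq) h6
    · exact absurd (show c^4 = 1 by
        have hij : (-c⁻¹) = (-(c^2)⁻¹) := h
        linear_combination ((-1:F) * c^2 + (-1:F) * c^3 + (-1:F) * c^4 + (-1:F) * c^5) * hij + ((1:F) + c * c⁻¹ + c^2 * c⁻¹ + c^3 * c⁻¹ + (-1:F) * c^4 + c^4 * c⁻¹) * hq + (c^2 + c^3 + c^4 + c^5) * hq3) h4
    · exact absurd (show c^4 = 1 by
        have hij : (-c⁻¹) = (c) := h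
        linear_combination (c + (-1:F) * c^3) * hij + ((1:F) + (-1:F) * c^2) * hq) h4
    · exact absurd (show c^4 = 1 by
        have hij : (-c⁻¹) = (c⁻¹) := h
        linear_combination ((1/2:F) * c + (-1/2:F) * c^5) * hij + ((1:F) + (-1:F) * c^4) * hq) h4
    · exact absurd (show c^4 = 1 by
        have hij : (-c⁻¹) = (-1) := h
        linear_combination (c + c^2 + c^3 + c^4) * hij + ((1:F) + c + c^2 + c^3) * hq) h4
    · exact absurd (show c^4 = 1 by
        have hij : (-c⁻¹) = (-c) := h
        linear_combination (c + c^3) * hij + ((1:F) + c^2) * hq) h4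
    · rfl
  

/-- δt_{β,β} acts on the eight components of the fine ℤ×ℤ₂-grading with eigenvalues
1, -β², -β⁻², β, β⁻¹, -1, -β, -β⁻¹, and these are pairwise distinct iff β⁴ ≠ 1 and
β⁶ ≠ 1. -/
theorem delta_t_eigenvalues {F : Type*} [Field F] [IsAlgClosed F] [CharZero F] (b : Fˣ) :
    (∀ k : Fin 8, ∀ u ∈ fineComp F k,
      deltaMap (Phi (tK b) (tK b) u) =
        (![(1 : F), -(b : F) ^ 2, -((b : F) ^ 2)⁻¹, (b : F), (b : F)⁻¹,
          -1, -(b : F), -((b : F))⁻¹] k) • u) ∧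
    (Function.Injective
      (![(1 : F), -(b : F) ^ 2, -((b : F) ^ 2)⁻¹, (b : F), (b : F)⁻¹,
        -1, -(b : F), -((b : F))⁻¹] : Fin 8 → F) ↔
      ((b : F) ^ 4 ≠ 1 ∧ (b : F) ^ 6 ≠ 1)) := by
  constructor
  · intro k u hu
    fin_cases k
    · exact eig_span b 1 _ (by
        rintro v (rfl | rfl | rfl) <;> funext m <;> fin_cases m <;>
          simp [kv, v10_0, v10_1, v10_2, v10_3, v10_4, v10_5, v10_6, v10_7, v10_8, v10_9, Pi.single_apply]) u hu
    · exact eig_span b (-(b:F)^2) _ (by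
        rintro v rfl; funext m; fin_cases m <;> simp [kv, v10_0, v10_1, v10_2, v10_3, v10_4, v10_5, v10_6, v10_7, v10_8, v10_9, Pi.single_apply]) u hu
    · exact eig_span b (-((b:F)^2)⁻¹) _ (by
        rintro v rfl; funext m; fin_cases m <;> simp [kv, v10_0, v10_1, v10_2, v10_3, v10_4, v10_5, v10_6, v10_7, v10_8, v10_9, Pi.single_apply, inv_pow]) u hu
    · exact eig_span b ((b:F)) _ (by
        rintro v rfl; funext m; fin_cases m <;> simp [kv, v10_0, v10_1, v10_2, v10_3, v10_4, v10_5, v10_6, v10_7, v10_8, v10_9, Pi.single_apply]) u hu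
    · exact eig_span b ((b:F)⁻¹) _ (by
        rintro v rfl; funext m; fin_cases m <;> simp [kv, v10_0, v10_1, v10_2, v10_3, v10_4, v10_5, v10_6, v10_7, v10_8, v10_9, Pi.single_apply]) u hu
    · exact eig_span b (-1) _ (by
        rintro v rfl; funext m; fin_cases m <;> simp [kv, v10_0, v10_1, v10_2, v10_3, v10_4, v10_5, v10_6, v10_7, v10_8, v10_9, Pi.single_apply]) u hu
    · exact eig_span b (-(b:F)) _ (by
        rintro v rfl; funext m; fin_cases m <;> simp [kv, v10_0, v10_1, v10_2, v10_3, v10_4, v10_5, v10_6, v10_7, v10_8, v10_9, Pi.single_apply]) u hu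
    · exact eig_span b (-(b:F)⁻¹) _ (by
        rintro v rfl; funext m; fin_cases m <;> simp [kv, v10_0, v10_1, v10_2, v10_3, v10_4, v10_5, v10_6, v10_7, v10_8, v10_9, Pi.single_apply]) u hu
  · exact inj_aux (b : F) b.ne_zero
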